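/- Assume the quadratic maximum setup: u, v : ℝ^d → ℝ are bounded Borel measurable, ε > 0, and ψ_ε(x,y) := u(x) − v(y) − ε⁻²‖x−y‖² attains a global maximum at (x̄, ȳ); set a := x̄ − ȳ and p := 2(x̄−ȳ)/ε². Let γ ∈ (0,1], C₀, C̃₀ > 0, and let j : ℝ^d × ℝ^d → ℝ^d be Borel measurable with ‖j(x,z)‖ ≤ C₀‖z‖ for all x, z, with ‖j(x,z) − j(y,z)‖ ≤ C₀‖z‖·‖x−y‖^γ for all x, y and all z ∈ B, and with ‖j(x,z) − j(y,z)‖ ≤ C̃₀‖x−y‖^γ for all x, y and all z ∉ B. Let μ be a nonnegative Borel measure on ℝ^d with ∫_B ‖z‖² dμ(z) < ∞ and μ(ℝ^d \ B) < ∞, define 𝒥[x, p, w] := ∫_{ℝ^d} ( w(x + j(x,z)) − w(x) − ⟨p, j(x,z)⟩·1_B(z) ) dμ(z), and assume the defining integrands are μ-integrable. Then for every δ ∈ (0,1]: 𝒥[x̄, p, u] − 𝒥[ȳ, p, v] ≤ 2C₀²ε⁻² ∫_{B_δ} ‖z‖² dμ(z) + C₀²‖a‖^{2γ}ε⁻²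 ∫_{B \ B_δ} ‖z‖² dμ(z) + ( C̃₀²‖a‖^{2γ} + 2C̃₀‖a‖^{γ+1} ) ε⁻² μ(ℝ^d \ B). -/

import Mathlib

/-!
Evaluating the maximality of `ψ_ε` at `(x̄ + w₁, ȳ + w₂)` and expanding the square gives, with
`p = 2ε⁻²(x̄ − ȳ)`, the second-order bound
`u(x̄ + w₁) − u(x̄) − (v(ȳ + w₂) − v(ȳ)) ≤ ⟨p, w₁ − w₂⟩ + ε⁻²‖w₁ − w₂‖²`.
Hence the difference of the two integrands is controlled pointwise: on `B_δ` by comparing each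
jump with no jump at all, `ε⁻²(‖j(x̄,z)‖² + ‖j(ȳ,z)‖²)`; on `B \ B_δ`, where the compensators
cancel the inner product, by `ε⁻²‖j(x̄,z) − j(ȳ,z)‖²`; and off `B` by Cauchy–Schwarz on the
inner product. Integrating these bounds over the three regions gives the estimate.
-/

open MeasureTheory RealInnerProductSpace Set

/-- The Lévy–Itô integro-differential operator
`𝒥[x, p, w] = ∫ (w(x + j(x,z)) − w(x) − ⟨p, j(x,z)⟩ 1_B(z)) dμ(z)`. -/
noncomputable def levyItoOp {d : ℕ} (μ : Measure (EuclideanSpace ℝ (Fin d)))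
    (j : EuclideanSpace ℝ (Fin d) → EuclideanSpace ℝ (Fin d) → EuclideanSpace ℝ (Fin d))
    (x p : EuclideanSpace ℝ (Fin d)) (w : EuclideanSpace ℝ (Fin d) → ℝ) : ℝ :=
  ∫ z, (w (x + j x z) - w x
    - (Metric.closedBall (0 : EuclideanSpace ℝ (Fin d)) 1).indicator
        (fun z' => ⟪p, j x z'⟫) z) ∂μ

open Metric

section PenalizedMax

variable {E : Type*} [NormedAddCommGroup E] [InnerProductSpace ℝ E]
  {u v : E → ℝ} {c : ℝ} {xb yb : E}

theorem increment_sub_le_of_penalized_max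
    (hmax : ∀ x y, u x - v y - c * ‖x - y‖ ^ 2 ≤ u xb - v yb - c * ‖xb - yb‖ ^ 2)
    (w₁ w₂ : E) :
    (u (xb + w₁) - u xb) - (v (yb + w₂) - v yb)
      ≤ ⟪(2 * c) • (xb - yb), w₁ - w₂⟫ + c * ‖w₁ - w₂‖ ^ 2 := by
  have h := hmax (xb + w₁) (yb + w₂)
  rw [show xb + w₁ - (yb + w₂) = (xb - yb) + (w₁ - w₂) by abel, norm_add_sq_real] at h
  rw [real_inner_smul_left]
  linear_combination h

theorem compensated_increment_sub_le_of_penalized_max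
    (hmax : ∀ x y, u x - v y - c * ‖x - y‖ ^ 2 ≤ u xb - v yb - c * ‖xb - yb‖ ^ 2)
    (w₁ w₂ : E) :
    (u (xb + w₁) - u xb - ⟪(2 * c) • (xb - yb), w₁⟫)
      - (v (yb + w₂) - v yb - ⟪(2 * c) • (xb - yb), w₂⟫) ≤ c * ‖w₁ - w₂‖ ^ 2 := by
  have h := increment_sub_le_of_penalized_max hmax w₁ w₂
  rw [inner_sub_right] at h
  linarith

theorem compensated_increment_sub_le_add_of_penalized_max
    (hmax : ∀ x y, u x - v y - c * ‖x - y‖ ^ 2 ≤ u xb - v yb - c * ‖xb - yb‖ ^ 2)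
    (w₁ w₂ : E) :
    (u (xb + w₁) - u xb - ⟪(2 * c) • (xb - yb), w₁⟫)
      - (v (yb + w₂) - v yb - ⟪(2 * c) • (xb - yb), w₂⟫) ≤ c * ‖w₁‖ ^ 2 + c * ‖w₂‖ ^ 2 := by
  have h₁ := compensated_increment_sub_le_of_penalized_max hmax w₁ 0
  have h₂ := compensated_increment_sub_le_of_penalized_max hmax 0 w₂
  simp only [add_zero, sub_self, inner_zero_right, sub_zero, zero_sub, norm_neg] at h₁ h₂
  linarith

end PenalizedMax

section SetIntegral

variable {α G : Type*} [MeasurableSpace α] {μ : Measure α} {s t : Set α}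

theorem integral_eq_setIntegral_add_setIntegral_diff_add_setIntegral_compl
    [NormedAddCommGroup G] [NormedSpace ℝ G] {f : α → G}
    (hst : s ⊆ t) (hs : MeasurableSet s) (ht : MeasurableSet t) (hf : Integrable f μ) :
    ∫ x, f x ∂μ = ∫ x in s, f x ∂μ + ∫ x in t \ s, f x ∂μ + ∫ x in tᶜ, f x ∂μ := by
  rw [← setIntegral_union disjoint_sdiff_self_right (ht.diff hs) hf.integrableOn
    hf.integrableOn, union_sdiff_cancel hst, integral_add_compl ht hf]

theorem setIntegral_le_mul_setIntegral_of_le {f g : α → ℝ} {K : ℝ} (hs : MeasurableSet s)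
    (hf : IntegrableOn f s μ) (hg : IntegrableOn g s μ) (h : ∀ x ∈ s, f x ≤ K * g x) :
    ∫ x in s, f x ∂μ ≤ K * ∫ x in s, g x ∂μ :=
  (setIntegral_mono_on hf (hg.const_mul K) hs h).trans_eq (integral_const_mul K _)

theorem setIntegral_le_mul_toReal_of_le {f : α → ℝ} {K : ℝ} (hs : MeasurableSet s)
    (hf : IntegrableOn f s μ) (hμs : μ s ≠ ⊤) (h : ∀ x ∈ s, f x ≤ K) :
    ∫ x in s, f x ∂μ ≤ K * (μ s).toReal := by
  have := setIntegral_mono_on hf (integrableOn_const hμs) hs h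
  rwa [setIntegral_const, smul_eq_mul, measureReal_def, mul_comm] at this

end SetIntegral

section LevyItoIntegrand

variable {E : Type*} [NormedAddCommGroup E] [InnerProductSpace ℝ E]

noncomputable def levyItoIntegrand (j : E → E → E) (x p : E) (w : E → ℝ) (z : E) : ℝ :=
  w (x + j x z) - w x - (closedBall (0 : E) 1).indicator (fun z' => ⟪p, j x z'⟫) z

variable {u v : E → ℝ} {c : ℝ} {xb yb p : E} {j : E → E → E} {z : E}

theorem levyItoIntegrand_sub_le_of_mem_closedBall_of_norm_le (hc : 0 ≤ c)
    (hmax : ∀ x y, u x - v y - c * ‖x - y‖ ^ 2 ≤ u xb - v yb - c * ‖xb - yb‖ ^ 2)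
    (hp : p = (2 * c) • (xb - yb)) (hz : z ∈ closedBall (0 : E) 1) {C₀ : ℝ}
    (hup : ∀ x, ‖j x z‖ ≤ C₀ * ‖z‖) :
    levyItoIntegrand j xb p u z - levyItoIntegrand j yb p v z
      ≤ 2 * C₀ ^ 2 * c * ‖z‖ ^ 2 := by
  have hsq : ∀ x, ‖j x z‖ ^ 2 ≤ C₀ ^ 2 * ‖z‖ ^ 2 := fun x => by
    rw [← mul_pow]; exact pow_le_pow_left₀ (norm_nonneg _) (hup x) 2
  subst hp
  simp only [levyItoIntegrand, indicator_of_mem hz]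
  calc _ ≤ c * ‖j xb z‖ ^ 2 + c * ‖j yb z‖ ^ 2 :=
        compensated_increment_sub_le_add_of_penalized_max hmax _ _
    _ ≤ c * (C₀ ^ 2 * ‖z‖ ^ 2) + c * (C₀ ^ 2 * ‖z‖ ^ 2) := by gcongr <;> exact hsq _
    _ = 2 * C₀ ^ 2 * c * ‖z‖ ^ 2 := by ring

theorem levyItoIntegrand_sub_le_of_mem_closedBall_of_holder (hc : 0 ≤ c)
    (hmax : ∀ x y, u x - v y - c * ‖x - y‖ ^ 2 ≤ u xb - v yb - c * ‖xb - yb‖ ^ 2)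
    (hp : p = (2 * c) • (xb - yb)) (hz : z ∈ closedBall (0 : E) 1) {C₀ γ : ℝ}
    (hlip : ‖j xb z - j yb z‖ ≤ C₀ * ‖z‖ * ‖xb - yb‖ ^ γ) :
    levyItoIntegrand j xb p u z - levyItoIntegrand j yb p v z
      ≤ C₀ ^ 2 * ‖xb - yb‖ ^ (2 * γ) * c * ‖z‖ ^ 2 := by
  subst hp
  simp only [levyItoIntegrand, indicator_of_mem hz]
  calc _ ≤ c * ‖j xb z - j yb z‖ ^ 2 :=
        compensated_increment_sub_le_of_penalized_max hmax _ _
    _ ≤ c * (C₀ * ‖z‖ * ‖xb - yb‖ ^ γ) ^ 2 := by gcongr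
    _ = C₀ ^ 2 * ‖xb - yb‖ ^ (2 * γ) * c * ‖z‖ ^ 2 := by
        rw [mul_comm 2 γ, Real.rpow_mul (norm_nonneg _), Real.rpow_two]; ring

theorem levyItoIntegrand_sub_le_of_notMem_closedBall (hc : 0 ≤ c)
    (hmax : ∀ x y, u x - v y - c * ‖x - y‖ ^ 2 ≤ u xb - v yb - c * ‖xb - yb‖ ^ 2)
    (hp : p = (2 * c) • (xb - yb)) (hz : z ∉ closedBall (0 : E) 1) {Ct₀ γ : ℝ}
    (hCt₀ : 0 ≤ Ct₀)
    (hlip' : ‖j xb z - j yb z‖ ≤ Ct₀ * ‖xb - yb‖ ^ γ) :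
    levyItoIntegrand j xb p u z - levyItoIntegrand j yb p v z
      ≤ (Ct₀ ^ 2 * ‖xb - yb‖ ^ (2 * γ) + 2 * Ct₀ * ‖xb - yb‖ ^ (γ + 1)) * c := by
  subst hp
  simp only [levyItoIntegrand, indicator_of_notMem hz, sub_zero]
  have hinner : ⟪xb - yb, j xb z - j yb z⟫ ≤ ‖xb - yb‖ * (Ct₀ * ‖xb - yb‖ ^ γ) :=
    (real_inner_le_norm _ _).trans (by gcongr)
  have hpow : ‖xb - yb‖ * ‖xb - yb‖ ^ γ ≤ ‖xb - yb‖ ^ (γ + 1) := by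
    rcases eq_or_ne ‖xb - yb‖ 0 with h0 | h0
    · rw [h0, zero_mul]; positivity
    · rw [Real.rpow_add_one h0, mul_comm]
  calc _ ≤ ⟪(2 * c) • (xb - yb), j xb z - j yb z⟫ + c * ‖j xb z - j yb z‖ ^ 2 :=
        increment_sub_le_of_penalized_max hmax _ _
    _ ≤ 2 * c * (‖xb - yb‖ * (Ct₀ * ‖xb - yb‖ ^ γ)) + c * (Ct₀ * ‖xb - yb‖ ^ γ) ^ 2 := by
        rw [real_inner_smul_left]; gcongr
    _ = c * Ct₀ ^ 2 * (‖xb - yb‖ ^ γ) ^ 2 + 2 * c * Ct₀ * (‖xb - yb‖ * ‖xb - yb‖ ^ γ) := by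
        ring
    _ ≤ c * Ct₀ ^ 2 * (‖xb - yb‖ ^ γ) ^ 2 + 2 * c * Ct₀ * ‖xb - yb‖ ^ (γ + 1) := by gcongr
    _ = (Ct₀ ^ 2 * ‖xb - yb‖ ^ (2 * γ) + 2 * Ct₀ * ‖xb - yb‖ ^ (γ + 1)) * c := by
        rw [mul_comm 2 γ, Real.rpow_mul (norm_nonneg _), Real.rpow_two]; ring

end LevyItoIntegrand

theorem quadratic_estimates_levy_ito_general {d : ℕ}
    (u v : EuclideanSpace ℝ (Fin d) → ℝ)
    (ε : ℝ)
    (xb yb : EuclideanSpace ℝ (Fin d))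
    (hmax : ∀ x y, u x - v y - (ε ^ 2)⁻¹ * ‖x - y‖ ^ 2
      ≤ u xb - v yb - (ε ^ 2)⁻¹ * ‖xb - yb‖ ^ 2)
    (a : EuclideanSpace ℝ (Fin d)) (ha : a = xb - yb)
    (p : EuclideanSpace ℝ (Fin d)) (hp : p = (2 / ε ^ 2) • (xb - yb))
    (γ C₀ Ct₀ : ℝ) (hCt₀ : 0 < Ct₀)
    (j : EuclideanSpace ℝ (Fin d) → EuclideanSpace ℝ (Fin d) → EuclideanSpace ℝ (Fin d))
    (hup : ∀ x z, ‖j x z‖ ≤ C₀ * ‖z‖)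
    (hlip : ∀ x y z, z ∈ Metric.closedBall (0 : EuclideanSpace ℝ (Fin d)) 1 →
      ‖j x z - j y z‖ ≤ C₀ * ‖z‖ * ‖x - y‖ ^ γ)
    (hlip' : ∀ x y z, z ∉ Metric.closedBall (0 : EuclideanSpace ℝ (Fin d)) 1 →
      ‖j x z - j y z‖ ≤ Ct₀ * ‖x - y‖ ^ γ)
    (μ : Measure (EuclideanSpace ℝ (Fin d)))
    (hμB : IntegrableOn (fun z => ‖z‖ ^ 2)
      (Metric.closedBall (0 : EuclideanSpace ℝ (Fin d)) 1) μ)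
    (hμBc : μ (Metric.closedBall (0 : EuclideanSpace ℝ (Fin d)) 1)ᶜ ≠ ⊤)
    (hintu : Integrable (fun z => u (xb + j xb z) - u xb
      - (Metric.closedBall (0 : EuclideanSpace ℝ (Fin d)) 1).indicator
          (fun z' => ⟪p, j xb z'⟫) z) μ)
    (hintv : Integrable (fun z => v (yb + j yb z) - v yb
      - (Metric.closedBall (0 : EuclideanSpace ℝ (Fin d)) 1).indicator
          (fun z' => ⟪p, j yb z'⟫) z) μ) :
    ∀ δ : ℝ, 0 < δ → δ ≤ 1 →
      levyItoOp μ j xb p u - levyItoOp μ j yb p v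
        ≤ 2 * C₀ ^ 2 * (ε ^ 2)⁻¹ * (∫ z in Metric.closedBall 0 δ, ‖z‖ ^ 2 ∂μ)
          + C₀ ^ 2 * ‖a‖ ^ (2 * γ) * (ε ^ 2)⁻¹
              * (∫ z in Metric.closedBall 0 1 \ Metric.closedBall 0 δ, ‖z‖ ^ 2 ∂μ)
          + (Ct₀ ^ 2 * ‖a‖ ^ (2 * γ) + 2 * Ct₀ * ‖a‖ ^ (γ + 1)) * (ε ^ 2)⁻¹
              * (μ (Metric.closedBall (0 : EuclideanSpace ℝ (Fin d)) 1)ᶜ).toReal := by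
  intro δ _ hδ1
  subst ha
  have hp' : p = (2 * (ε ^ 2)⁻¹) • (xb - yb) := by rw [hp, div_eq_mul_inv]
  have hc : (0 : ℝ) ≤ (ε ^ 2)⁻¹ := by positivity
  have hBδ : closedBall (0 : EuclideanSpace ℝ (Fin d)) δ ⊆ closedBall 0 1 :=
    closedBall_subset_closedBall hδ1
  have hint :
      Integrable (fun z => levyItoIntegrand j xb p u z - levyItoIntegrand j yb p v z) μ :=
    hintu.sub hintv
  have hdiff : levyItoOp μ j xb p u - levyItoOp μ j yb p v
      = ∫ z, (levyItoIntegrand j xb p u z - levyItoIntegrand j yb p v z) ∂μ :=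
    (integral_sub hintu hintv).symm
  rw [hdiff, integral_eq_setIntegral_add_setIntegral_diff_add_setIntegral_compl hBδ
    measurableSet_closedBall measurableSet_closedBall hint]
  refine add_le_add (add_le_add ?_ ?_) ?_
  · exact setIntegral_le_mul_setIntegral_of_le measurableSet_closedBall hint.integrableOn
      (hμB.mono_set hBδ) fun z hz =>
        levyItoIntegrand_sub_le_of_mem_closedBall_of_norm_le hc hmax hp' (hBδ hz) (hup · z)
  · exact setIntegral_le_mul_setIntegral_of_le (measurableSet_closedBall.diff
      measurableSet_closedBall) hint.integrableOn (hμB.mono_set sdiff_subset) fun z hz =>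
        levyItoIntegrand_sub_le_of_mem_closedBall_of_holder hc hmax hp' hz.1
          (hlip xb yb z hz.1)
  · exact setIntegral_le_mul_toReal_of_le measurableSet_closedBall.compl hint.integrableOn
      hμBc fun z hz =>
        levyItoIntegrand_sub_le_of_notMem_closedBall hc hmax hp' hz hCt₀.le (hlip' xb yb z hz)

/-- **Quadratic estimates for Lévy–Itô operators (Proposition 6.7 / prop_QdrEstLI).**
In the quadratic maximum setup (`ψ_ε(x,y) = u(x) − v(y) − ε⁻²‖x−y‖²` maximal at `(x̄,ȳ)`,
`p = 2(x̄−ȳ)/ε²`), for every `δ ∈ (0,1]`,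
`𝒥[x̄,p,u] − 𝒥[ȳ,p,v] ≤ 2C₀²ε⁻²∫_{B_δ}‖z‖²dμ + C₀²‖a‖^{2γ}ε⁻²∫_{B∖B_δ}‖z‖²dμ
  + (C̃₀²‖a‖^{2γ} + 2C̃₀‖a‖^{γ+1})ε⁻²μ(Bᶜ)`. -/
theorem quadratic_estimates_levy_ito {d : ℕ}
    (u v : EuclideanSpace ℝ (Fin d) → ℝ)
    (hum : Measurable u) (hvm : Measurable v)
    (hub : ∃ C, ∀ x, |u x| ≤ C) (hvb : ∃ C, ∀ x, |v x| ≤ C)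
    (ε : ℝ) (hε : 0 < ε)
    (xb yb : EuclideanSpace ℝ (Fin d))
    (hmax : ∀ x y, u x - v y - (ε ^ 2)⁻¹ * ‖x - y‖ ^ 2
      ≤ u xb - v yb - (ε ^ 2)⁻¹ * ‖xb - yb‖ ^ 2)
    (a : EuclideanSpace ℝ (Fin d)) (ha : a = xb - yb)
    (p : EuclideanSpace ℝ (Fin d)) (hp : p = (2 / ε ^ 2) • (xb - yb))
    (γ C₀ Ct₀ : ℝ) (hγ : γ ∈ Ioc (0:ℝ) 1) (hC₀ : 0 < C₀) (hCt₀ : 0 < Ct₀)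
    (j : EuclideanSpace ℝ (Fin d) → EuclideanSpace ℝ (Fin d) → EuclideanSpace ℝ (Fin d))
    (hj : Measurable (Function.uncurry j))
    (hup : ∀ x z, ‖j x z‖ ≤ C₀ * ‖z‖)
    (hlip : ∀ x y z, z ∈ Metric.closedBall (0 : EuclideanSpace ℝ (Fin d)) 1 →
      ‖j x z - j y z‖ ≤ C₀ * ‖z‖ * ‖x - y‖ ^ γ)
    (hlip' : ∀ x y z, z ∉ Metric.closedBall (0 : EuclideanSpace ℝ (Fin d)) 1 →
      ‖j x z - j y z‖ ≤ Ct₀ * ‖x - y‖ ^ γ)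
    (μ : Measure (EuclideanSpace ℝ (Fin d)))
    (hμB : IntegrableOn (fun z => ‖z‖ ^ 2)
      (Metric.closedBall (0 : EuclideanSpace ℝ (Fin d)) 1) μ)
    (hμBc : μ (Metric.closedBall (0 : EuclideanSpace ℝ (Fin d)) 1)ᶜ ≠ ⊤)
    (hintu : Integrable (fun z => u (xb + j xb z) - u xb
      - (Metric.closedBall (0 : EuclideanSpace ℝ (Fin d)) 1).indicator
          (fun z' => ⟪p, j xb z'⟫) z) μ)
    (hintv : Integrable (fun z => v (yb + j yb z) - v yb
      - (Metric.closedBall (0 : EuclideanSpace ℝ (Fin d)) 1).indicator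
          (fun z' => ⟪p, j yb z'⟫) z) μ) :
    ∀ δ : ℝ, 0 < δ → δ ≤ 1 →
      levyItoOp μ j xb p u - levyItoOp μ j yb p v
        ≤ 2 * C₀ ^ 2 * (ε ^ 2)⁻¹ * (∫ z in Metric.closedBall 0 δ, ‖z‖ ^ 2 ∂μ)
          + C₀ ^ 2 * ‖a‖ ^ (2 * γ) * (ε ^ 2)⁻¹
              * (∫ z in Metric.closedBall 0 1 \ Metric.closedBall 0 δ, ‖z‖ ^ 2 ∂μ)
          + (Ct₀ ^ 2 * ‖a‖ ^ (2 * γ) + 2 * Ct₀ * ‖a‖ ^ (γ + 1)) * (ε ^ 2)⁻¹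
              * (μ (Metric.closedBall (0 : EuclideanSpace ℝ (Fin d)) 1)ᶜ).toReal :=
  quadratic_estimates_levy_ito_general u v ε xb yb hmax a ha p hp γ C₀ Ct₀ hCt₀ j hup hlip hlip' μ
    hμB hμBc hintu hintv
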